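/- (Family I) In the dual bracket of the Galilei bialgebra ansatz, take α ∈ ℝ³ arbitrary, β ∈ ℝ with β ≠ 0, and set all other parameters to zero: γ = φ = λ = ξ = n = 0, v = θ = ρ = 0, σ = χ = ω = 0. Then the resulting bracket satisfies the Jacobi identity, and hence defines a Lie algebra structure on the 10-dimensional space spanned by H̃, P̃_i, K̃_i, J̃_i. -/

import Mathlib

/-- The Levi-Civita symbol on `{1,2,3}` (indexed by `Fin 3`). -/
def eps (i j k : Fin 3) : ℝ :=
  if (i, j, k) = (0, 1, 2) ∨ (i, j, k) = (1, 2, 0) ∨ (i, j, k) = (2, 0, 1) then 1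
  else if (i, j, k) = (2, 1, 0) ∨ (i, j, k) = (1, 0, 2) ∨ (i, j, k) = (0, 2, 1) then -1
  else 0

/-- The Kronecker delta on `Fin 3`. -/
def kron (i j : Fin 3) : ℝ := if i = j then 1 else 0

/-- The 10-dimensional real vector space with basis `H̃, P̃_i, K̃_i, J̃_i`, an element
being recorded by its coefficients `(h, p, k, j)` in this basis. -/
abbrev DualV : Type := ℝ × (Fin 3 → ℝ) × (Fin 3 → ℝ) × (Fin 3 → ℝ)

/-- The dual bracket of the Galilei bialgebra ansatz: the antisymmetric bilinear
bracket on the span of `H̃, P̃_i, K̃_i, J̃_i` determined by the structure constants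
(with parameters `α, γ, φ, λ, ξ, n ∈ ℝ³`, `β, v, θ, ρ ∈ ℝ`, `σ, χ, ω ∈ M₃(ℝ)`):
`[H̃, J̃_k] = ε_{ikl} α_l J̃_i`;
`[H̃, P̃_k] = γ_k H̃ + (β δ_{ik} + ε_{ikl} α_l) P̃_i + ε_{ikl} φ_l J̃_i`;
`[H̃, K̃_k] = (β δ_{ik} + ε_{ikl} α_l) K̃_i + ε_{ikl} γ_l J̃_i`;
`[K̃_k, J̃_l] = 2(n_k δ_{li} − n_i δ_{kl}) K̃_i + 2(ε_{ikn} ω_{ln} + ε_{iln} ω_{nk}) J̃_i`;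
`[P̃_l, P̃_m] = (χ_{lm} − χ_{ml}) H̃ + 2 ε_{klm}(ρ δ_{ki} + (1/2)(σ_{ik} − σ_{nn} δ_{ik})) P̃_i`
`  + 2(v ε_{ilm} + (1/2)(φ_l δ_{im} − φ_m δ_{il})) K̃_i + 2(λ_l δ_{im} − λ_m δ_{il}) J̃_i`;
`[P̃_k, K̃_l] = (2 ξ_n ε_{nkl} − θ δ_{kl}) H̃ + (2 ε_{nki} ω_{nl} − ω_{nn} ε_{lki}) P̃_i`
`  + (ρ ε_{kli} − ε_{lin} σ_{kn} − δ_{ki} γ_l) K̃_i + (ε_{ikn} χ_{nl} + ε_{iln} χ_{kn}) J̃_i`;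
`[P̃_k, J̃_l] = (2 ω_{lk} − ω_{nn} δ_{lk}) H̃ + 2(n_k δ_{li} − n_i δ_{kl}) P̃_i`
`  − (β ε_{kli} + α_l δ_{ki}) K̃_i + (ε_{ikn} σ_{nl} + ε_{iln} σ_{kn}) J̃_i`;
`[K̃_m, K̃_n] = 2 ε_{kmn} ω_{ki} K̃_i + 2(ξ_m δ_{ni} − ξ_n δ_{mi}) J̃_i`;
`[J̃_k, J̃_l] = 2(n_k δ_{li} − n_l δ_{ki}) J̃_i`. -/
noncomputable def dualBracket (α γv φv lam ξ nv : Fin 3 → ℝ) (β v θ ρ : ℝ)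
    (σ χ ω : Fin 3 → Fin 3 → ℝ) (X Y : DualV) : DualV :=
  -- coefficients of `X` and `Y` on `H̃, P̃, K̃, J̃`
  let h : ℝ := X.1; let p := X.2.1; let κ := X.2.2.1; let j := X.2.2.2
  let h' : ℝ := Y.1; let p' := Y.2.1; let κ' := Y.2.2.1; let j' := Y.2.2.2
  ( -- H̃ component
    (∑ k, (h * p' k - h' * p k) * γv k)
    + (∑ l, ∑ m, p l * p' m * (χ l m - χ m l))
    + (∑ k, ∑ l, (p k * κ' l - p' k * κ l) * (2 * (∑ n, ξ n * eps n k l) - θ * kron k l))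
    + (∑ k, ∑ l, (p k * j' l - p' k * j l) * (2 * ω l k - (∑ n, ω n n) * kron l k)),
    -- P̃ component
    fun i =>
      (∑ k, (h * p' k - h' * p k) * (β * kron i k + ∑ l, eps i k l * α l))
      + (∑ l, ∑ m, p l * p' m *
          (2 * ∑ k, eps k l m * (ρ * kron k i + (1/2) * (σ i k - (∑ n, σ n n) * kron i k))))
      + (∑ k, ∑ l, (p k * κ' l - p' k * κ l) *
          (2 * (∑ n, eps n k i * ω n l) - (∑ n, ω n n) * eps l k i))
      + (∑ k, ∑ l, (p k * j' l - p' k * j l) * (2 * (nv k * kron l i - nv i * kron k l))),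
    -- K̃ component
    fun i =>
      (∑ k, (h * κ' k - h' * κ k) * (β * kron i k + ∑ l, eps i k l * α l))
      + (∑ k, ∑ l, (κ k * j' l - κ' k * j l) * (2 * (nv k * kron l i - nv i * kron k l)))
      + (∑ l, ∑ m, p l * p' m *
          (2 * (v * eps i l m + (1/2) * (φv l * kron i m - φv m * kron i l))))
      + (∑ k, ∑ l, (p k * κ' l - p' k * κ l) *
          (ρ * eps k l i - (∑ n, eps l i n * σ k n) - kron k i * γv l))
      + (∑ k, ∑ l, (p k * j' l - p' k * j l) * (-(β * eps k l i + α l * kron k i)))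
      + (∑ m, ∑ n, κ m * κ' n * (2 * ∑ k, eps k m n * ω k i)),
    -- J̃ component
    fun i =>
      (∑ k, (h * j' k - h' * j k) * (∑ l, eps i k l * α l))
      + (∑ k, (h * p' k - h' * p k) * (∑ l, eps i k l * φv l))
      + (∑ k, (h * κ' k - h' * κ k) * (∑ l, eps i k l * γv l))
      + (∑ k, ∑ l, (κ k * j' l - κ' k * j l) *
          (2 * ∑ n, (eps i k n * ω l n + eps i l n * ω n k)))
      + (∑ l, ∑ m, p l * p' m * (2 * (lam l * kron i m - lam m * kron i l)))
      + (∑ k, ∑ l, (p k * κ' l - p' k * κ l) * (∑ n, (eps i k n * χ n l + eps i l n * χ k n)))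
      + (∑ k, ∑ l, (p k * j' l - p' k * j l) * (∑ n, (eps i k n * σ n l + eps i l n * σ k n)))
      + (∑ m, ∑ n, κ m * κ' n * (2 * (ξ m * kron n i - ξ n * kron m i)))
      + (∑ k, ∑ l, j k * j' l * (2 * (nv k * kron l i - nv l * kron k i))) )

/-- A bracket operation on `DualV` satisfies the Jacobi identity. -/
def JacobiHolds (br : DualV → DualV → DualV) : Prop :=
  ∀ X Y Z : DualV, br X (br Y Z) + br Z (br X Y) + br Y (br Z X) = 0

/-!
With these parameters every bracket has zero `H̃`-component, and the only brackets not
involving `H̃` are `[P̃, J̃] ⊆ K̃`. So the algebra is a semidirect product `ℝ H̃ ⋉ N`, where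
`N = span (P̃, K̃, J̃)` is two-step nilpotent with central `K̃`, and `ad H̃` acts on `N` by
`v ↦ β v + v × α` on `P̃` and `K̃` and by `v ↦ v × α` on `J̃`. The Jacobi identity of such an
extension reduces to `ad H̃` being a derivation of `N`; for the bracket
`[p, j] = -β p × j - (α ⬝ j) p` this is the Jacobi identity of the cross product together
with `α ⬝ (j × α) = 0`.
-/

open Matrix

section Semidirect

variable {R N : Type*} [CommRing R] [AddCommGroup N] [Module R N]

def semidirectBracket (D : N →ₗ[R] N) (br : N →ₗ[R] N →ₗ[R] N) (X Y : R × N) : R × N :=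
  (0, X.1 • D Y.2 - Y.1 • D X.2 + br X.2 Y.2)

theorem semidirectBracket_jacobi (D : N →ₗ[R] N) (br : N →ₗ[R] N →ₗ[R] N)
    (anticomm : ∀ x y, br x y = -br y x)
    (jacobi : ∀ x y z, br x (br y z) + br z (br x y) + br y (br z x) = 0)
    (leibniz : ∀ x y, D (br x y) = br (D x) y + br x (D y)) (X Y Z : R × N) :
    semidirectBracket D br X (semidirectBracket D br Y Z)
      + semidirectBracket D br Z (semidirectBracket D br X Y)
      + semidirectBracket D br Y (semidirectBracket D br Z X) = 0 := by
  obtain ⟨a, x⟩ := X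
  obtain ⟨b, y⟩ := Y
  obtain ⟨c, z⟩ := Z
  ext
  · simp [semidirectBracket]
  · simp only [semidirectBracket, map_add, map_sub, map_smul, zero_smul, sub_zero,
      Prod.snd_add, Prod.snd_zero, leibniz]
    rw [anticomm z (D y), anticomm x (D z), anticomm y (D x)]
    linear_combination (norm := module) jacobi x y z

end Semidirect

namespace FamilyI

variable (α : Fin 3 → ℝ) (β : ℝ)

noncomputable def rotation : (Fin 3 → ℝ) →ₗ[ℝ] Fin 3 → ℝ := crossProduct.flip α

noncomputable def dilationRotation : (Fin 3 → ℝ) →ₗ[ℝ] Fin 3 → ℝ :=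
  β • LinearMap.id + rotation α

noncomputable def momentumRotationBracket :
    (Fin 3 → ℝ) →ₗ[ℝ] (Fin 3 → ℝ) →ₗ[ℝ] Fin 3 → ℝ :=
  LinearMap.mk₂ ℝ (fun p j => -(β • p ⨯₃ j) - (α ⬝ᵥ j) • p)
    (by intros; simp only [map_add, LinearMap.add_apply]; module)
    (by intros; simp only [map_smul, LinearMap.smul_apply]; module)
    (by intros; simp only [map_add, dotProduct_add]; module)
    (by intros; simp only [map_smul, dotProduct_smul, smul_eq_mul]; module)

theorem rotation_apply (v : Fin 3 → ℝ) : rotation α v = v ⨯₃ α := rfl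

theorem dilationRotation_apply (v : Fin 3 → ℝ) :
    dilationRotation α β v = β • v + v ⨯₃ α := rfl

theorem momentumRotationBracket_apply (p j : Fin 3 → ℝ) :
    momentumRotationBracket α β p j = -(β • p ⨯₃ j) - (α ⬝ᵥ j) • p := rfl

theorem momentumRotationBracket_leibniz (p j : Fin 3 → ℝ) :
    dilationRotation α β (momentumRotationBracket α β p j)
      = momentumRotationBracket α β (dilationRotation α β p) j
        + momentumRotationBracket α β p (rotation α j) := by
  have cross_leibniz : p ⨯₃ j ⨯₃ α = p ⨯₃ α ⨯₃ j + p ⨯₃ (j ⨯₃ α) := by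
    rw [cross_cross, ← cross_anticomm (p ⨯₃ α) j]
    abel
  simp only [dilationRotation_apply, rotation_apply, momentumRotationBracket_apply,
    map_sub, map_neg, map_smul, map_add, LinearMap.add_apply, LinearMap.smul_apply,
    dot_cross_self, cross_leibniz]
  module

abbrev PKJ : Type := (Fin 3 → ℝ) × (Fin 3 → ℝ) × (Fin 3 → ℝ)

noncomputable def derivation : PKJ →ₗ[ℝ] PKJ :=
  (dilationRotation α β).prodMap ((dilationRotation α β).prodMap (rotation α))

noncomputable def nilBracket : PKJ →ₗ[ℝ] PKJ →ₗ[ℝ] PKJ :=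
  LinearMap.mk₂ ℝ
    (fun n n' =>
      (0, momentumRotationBracket α β n.1 n'.2.2 - momentumRotationBracket α β n'.1 n.2.2, 0))
    (by intros; ext <;>
      simp only [Prod.fst_add, Prod.snd_add, map_add, LinearMap.add_apply, Pi.add_apply,
        Pi.sub_apply, Pi.zero_apply, Prod.mk_add_mk, add_zero]; abel)
    (by intros; ext <;> simp [smul_sub])
    (by intros; ext <;>
      simp only [Prod.fst_add, Prod.snd_add, map_add, LinearMap.add_apply, Pi.add_apply,
        Pi.sub_apply, Pi.zero_apply, Prod.mk_add_mk, add_zero]; abel)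
    (by intros; ext <;> simp [smul_sub])

theorem nilBracket_anticomm (x y : PKJ) : nilBracket α β x y = -nilBracket α β y x := by
  ext <;> simp [nilBracket]

theorem nilBracket_nilBracket (x y z : PKJ) : nilBracket α β x (nilBracket α β y z) = 0 := by
  ext <;> simp [nilBracket]

theorem derivation_leibniz (x y : PKJ) :
    derivation α β (nilBracket α β x y)
      = nilBracket α β (derivation α β x) y + nilBracket α β x (derivation α β y) := by
  ext <;>
    simp only [derivation, nilBracket, LinearMap.mk₂_apply, LinearMap.prodMap_apply, map_zero,
      map_sub, momentumRotationBracket_leibniz, Pi.zero_apply, Pi.sub_apply, Pi.add_apply,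
      Prod.mk_add_mk, add_zero]
  abel

theorem dualBracket_eq_semidirectBracket :
    dualBracket α 0 0 0 0 0 β 0 0 0 0 0 0
      = semidirectBracket (derivation α β) (nilBracket α β) := by
  funext X Y
  ext i
  · simp [dualBracket, semidirectBracket]
  all_goals
    simp only [dualBracket, semidirectBracket, derivation, nilBracket, LinearMap.mk₂_apply,
      LinearMap.prodMap_apply, dilationRotation_apply, rotation_apply,
      momentumRotationBracket_apply, Prod.snd_add, Prod.snd_sub, Prod.smul_snd, Prod.fst_add,
      Prod.fst_sub, Prod.smul_fst, Pi.add_apply, Pi.sub_apply, Pi.neg_apply, Pi.smul_apply,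
      Pi.zero_apply, smul_eq_mul]
    fin_cases i <;> simp [Fin.sum_univ_three, eps, kron, cross_apply, dotProduct] <;> ring

end FamilyI

theorem familyI_jacobi (α : Fin 3 → ℝ) (β : ℝ) :
    JacobiHolds (dualBracket α 0 0 0 0 0 β 0 0 0 0 0 0) := by
  rw [FamilyI.dualBracket_eq_semidirectBracket]
  refine semidirectBracket_jacobi _ _ (FamilyI.nilBracket_anticomm α β) ?_
    (FamilyI.derivation_leibniz α β)
  intro x y z
  simp only [FamilyI.nilBracket_nilBracket, add_zero]
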